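/- Let g_j : ℝⁿ → ℝⁿ be a smooth vector field and Π : ℝⁿ → Sym(n,ℝ) smooth. The subbundle K(x) = {(δx,p) : p = Π(x)δx} is invariant under g_j (i.e. for every smooth section (X, ΠX) of K, the pair (L_{g_j}X, L_{g_j}(ΠX-as-one-form)) is again a section of K) if and only if Dg_j(x)ᵀΠ(x) + Π(x)Dg_j(x) + DΠ(x)·g_j(x) = 0 for all x, where DΠ(x)·g_j(x) is the directional derivative of Π along g_j. -/

import Mathlib

open Matrix

/-- Jacobian matrix of a map between coordinate spaces. -/
noncomputable def jacM {n m : ℕ} (f : (Fin n → ℝ) → (Fin m → ℝ)) (x : Fin n → ℝ) :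
    Matrix (Fin m) (Fin n) ℝ :=
  Matrix.of fun i j => fderiv ℝ f x (Pi.single j 1) i

/-- Entrywise directional derivative of a matrix-valued map. -/
noncomputable def dMat {n : ℕ} (Pm : (Fin n → ℝ) → Matrix (Fin n) (Fin n) ℝ)
    (x v : Fin n → ℝ) : Matrix (Fin n) (Fin n) ℝ :=
  Matrix.of fun i j => fderiv ℝ (fun y => Pm y i j) x v

private lemma fderiv_apply_pi {n m : ℕ} {f : (Fin n → ℝ) → (Fin m → ℝ)} {x v : Fin n → ℝ}
    (hf : DifferentiableAt ℝ f x) (i : Fin m) :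
    fderiv ℝ f x v i = fderiv ℝ (fun y => f y i) x v := by
  rw [fderiv_pi (differentiableAt_pi.mp hf)]; rfl

private lemma fderiv_eq_jac_mulVec {n m : ℕ} {f : (Fin n → ℝ) → (Fin m → ℝ)} {x : Fin n → ℝ}
    (hf : DifferentiableAt ℝ f x) (v : Fin n → ℝ) :
    fderiv ℝ f x v = jacM f x *ᵥ v := by
  have hv : v = ∑ j, v j • (Pi.single j 1 : Fin n → ℝ) := by
    ext k
    simp [Pi.single_apply, Finset.sum_apply, Finset.sum_ite_eq']
  funext i
  rw [show fderiv ℝ f x v = fderiv ℝ f x (∑ j, v j • (Pi.single j 1 : Fin n → ℝ)) from by rw [← hv]]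
  rw [map_sum]
  simp only [_root_.map_smul]
  simp [jacM, Matrix.mulVec, dotProduct, Finset.sum_apply, mul_comm]

private lemma fderiv_mulVec_pr {n : ℕ} {Pm : (Fin n → ℝ) → Matrix (Fin n) (Fin n) ℝ}
    {X : (Fin n → ℝ) → (Fin n → ℝ)} {x v : Fin n → ℝ}
    (hPm : ∀ i j, DifferentiableAt ℝ (fun y => Pm y i j) x)
    (hX : DifferentiableAt ℝ X x) :
    fderiv ℝ (fun y => Pm y *ᵥ X y) x v
      = dMat Pm x v *ᵥ X x + Pm x *ᵥ fderiv ℝ X x v := by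
  have hXk : ∀ k, DifferentiableAt ℝ (fun y => X y k) x := differentiableAt_pi.mp hX
  have hcomp : ∀ i, DifferentiableAt ℝ (fun y => (Pm y *ᵥ X y) i) x := by
    intro i
    have : (fun y => (Pm y *ᵥ X y) i) = fun y => ∑ k, Pm y i k * X y k := by
      funext y; simp [Matrix.mulVec, dotProduct]
    rw [this]
    exact DifferentiableAt.fun_sum fun k _ => (hPm i k).mul (hXk k)
  have hd : DifferentiableAt ℝ (fun y => Pm y *ᵥ X y) x := differentiableAt_pi.mpr hcomp
  funext i
  rw [fderiv_apply_pi hd i]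
  have h1 : (fun y => (Pm y *ᵥ X y) i) = fun y => ∑ k, Pm y i k * X y k := by
    funext y; simp [Matrix.mulVec, dotProduct]
  rw [h1, fderiv_fun_sum (A := fun k y => Pm y i k * X y k) fun k _ => (hPm i k).mul (hXk k)]
  have h2 : ∀ k, fderiv ℝ (fun y => Pm y i k * X y k) x v
      = Pm x i k * fderiv ℝ (fun y => X y k) x v + X x k * fderiv ℝ (fun y => Pm y i k) x v := by
    intro k
    rw [fderiv_fun_mul (hPm i k) (hXk k)]; simp
  simp only [ContinuousLinearMap.coe_sum', Finset.sum_apply, h2]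
  rw [Finset.sum_add_distrib]
  simp only [Pi.add_apply, Matrix.mulVec, dotProduct, dMat, Matrix.of_apply,
    fderiv_apply_pi hX]
  ring_nf
  congr 1 <;> exact Finset.sum_congr rfl fun k _ => by ring

/-- For a smooth vector field `g` and smooth symmetric `Π`, the
subbundle `K(x) = {(δx,p) : p = Π(x)δx}` is invariant under `g` — i.e. for every
smooth section `(X, ΠX)` of `K`, the pair `(L_g X, L_g(ΠX))` is again a section
of `K`, where `L_g X = DX·g − Dg·X` and `L_g α = Dgᵀα + Dα·g` — if and only if
`Dg(x)ᵀΠ(x) + Π(x)Dg(x) + DΠ(x)·g(x) = 0` for all `x`. -/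
theorem stmt_18 {n : ℕ} (g : (Fin n → ℝ) → (Fin n → ℝ))
    (Pm : (Fin n → ℝ) → Matrix (Fin n) (Fin n) ℝ)
    (hg : ContDiff ℝ (⊤ : ℕ∞) g) (hPm : ∀ i j, ContDiff ℝ (⊤ : ℕ∞) fun x => Pm x i j)
    (hPmsym : ∀ x, (Pm x).IsSymm) :
    (∀ X : (Fin n → ℝ) → (Fin n → ℝ), ContDiff ℝ (⊤ : ℕ∞) X →
      ∀ x, (jacM g x)ᵀ *ᵥ (Pm x *ᵥ X x) + fderiv ℝ (fun y => Pm y *ᵥ X y) x (g x)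
        = Pm x *ᵥ (fderiv ℝ X x (g x) - fderiv ℝ g x (X x))) ↔
    (∀ x, (jacM g x)ᵀ * Pm x + Pm x * jacM g x + dMat Pm x (g x) = 0) := by
  have hgd : ∀ x, DifferentiableAt ℝ g x := fun x => (hg.differentiable (by simp)).differentiableAt
  have hPmd : ∀ x i j, DifferentiableAt ℝ (fun y => Pm y i j) x :=
    fun x i j => ((hPm i j).differentiable (by simp)).differentiableAt
  constructor
  · intro H x
    ext i j
    have h := H (fun _ => Pi.single j (1:ℝ)) contDiff_const x
    rw [fderiv_mulVec_pr (hPmd x) (differentiableAt_const _),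
        fderiv_eq_jac_mulVec (hgd x)] at h
    simp only [fderiv_fun_const, Pi.zero_apply, ContinuousLinearMap.zero_apply,
      Matrix.mulVec_zero, add_zero, zero_sub, Matrix.mulVec_neg, Matrix.mulVec_mulVec] at h
    have h' : ((jacM g x)ᵀ * Pm x + Pm x * jacM g x + dMat Pm x (g x)) *ᵥ Pi.single j 1
        = 0 := by
      rw [Matrix.add_mulVec, Matrix.add_mulVec]
      linear_combination (norm := module) h
    have := congrFun h' i
    simpa [Matrix.mulVec_single] using this
  · intro H X hX x
    have hXd : DifferentiableAt ℝ X x := (hX.differentiable (by simp)).differentiableAt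
    rw [fderiv_mulVec_pr (hPmd x) hXd, fderiv_eq_jac_mulVec (hgd x) (X x),
        Matrix.mulVec_sub]
    have h0 : ((jacM g x)ᵀ * Pm x + Pm x * jacM g x + dMat Pm x (g x)) *ᵥ X x = 0 := by
      rw [H x, Matrix.zero_mulVec]
    simp only [Matrix.add_mulVec, Matrix.mulVec_mulVec] at h0 ⊢
    linear_combination (norm := module) h0
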